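/- The commutator subgroup of the group U_2 of unitriangular automorphisms of A_2 = K⟨x,y⟩ is [U_2, U_2] = { (x + f(y), y) : f(y) ∈ K⟨y⟩ }, i.e. it consists exactly of the automorphisms fixing y and sending x ↦ x + f(y) for some f in the subalgebra generated by y. -/

import Mathlib

/- STATEMENT 4: the commutator subgroup of the group U₂ of unitriangular
   automorphisms of A₂ = K⟨x,y⟩ consists exactly of the automorphisms fixing y
   and sending x ↦ x + f(y) for some f ∈ K⟨y⟩.  Here x = ι K 0, y = ι K 1. -/

noncomputable section
open FreeAlgebra

abbrev A2 (K : Type) [Field K] := FreeAlgebra K (Fin 2)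

private lemma adjoin_stable {K : Type} [Field K]
    (φ : A2 K ≃ₐ[K] A2 K) (b : K)
    (hy : φ (ι K 1) = ι K 1 + algebraMap K (A2 K) b) :
    ∀ u ∈ Algebra.adjoin K ({ι K 1} : Set (A2 K)),
      φ u ∈ Algebra.adjoin K ({ι K 1} : Set (A2 K)) := by
  intro u hu
  induction hu using Algebra.adjoin_induction with
  | mem v hv =>
      rcases hv with rfl
      rw [hy]
      exact add_mem (Algebra.self_mem_adjoin_singleton K _) (Subalgebra.algebraMap_mem _ _)
  | algebraMap r => rw [AlgEquiv.commutes]; exact Subalgebra.algebraMap_mem _ _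
  | add u v _ _ hu hv => rw [map_add]; exact add_mem hu hv
  | mul u v _ _ hu hv => rw [map_mul]; exact mul_mem hu hv

/-- The group `U₂` of unitriangular automorphisms of the free associative algebra
`A₂ = K⟨x,y⟩` (with `x = ι K 0`, `y = ι K 1`): automorphisms sending
`x ↦ x + f(y)`, `y ↦ y + b·1` with `f ∈ K⟨y⟩`, `b ∈ K`. -/
def U2 (K : Type) [Field K] : Subgroup (A2 K ≃ₐ[K] A2 K) where
  carrier := {φ | ∃ f ∈ Algebra.adjoin K ({ι K 1} : Set (A2 K)), ∃ b : K,
    φ (ι K 0) = ι K 0 + f ∧ φ (ι K 1) = ι K 1 + algebraMap K (A2 K) b}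
  one_mem' := ⟨0, Subalgebra.zero_mem _, 0, by simp, by simp⟩
  mul_mem' := by
    rintro φ ψ ⟨f, hf, b, hfx, hfy⟩ ⟨h, hh, c, hhx, hhy⟩
    refine ⟨f + φ h, add_mem hf (adjoin_stable φ b hfy h hh), b + c, ?_, ?_⟩
    · show φ (ψ (ι K 0)) = _
      rw [hhx, map_add, hfx, add_assoc]
    · show φ (ψ (ι K 1)) = _
      rw [hhy, map_add, hfy, AlgEquiv.commutes, map_add, add_assoc]
  inv_mem' := by
    rintro φ ⟨f, hf, b, hfx, hfy⟩
    have hsy : φ.symm (ι K 1) = ι K 1 + algebraMap K (A2 K) (-b) := by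
      have h1 := congrArg φ.symm hfy
      rw [AlgEquiv.symm_apply_apply, map_add, AlgEquiv.commutes] at h1
      rw [eq_sub_of_add_eq h1.symm, map_neg, sub_eq_add_neg]
    have hsx : φ.symm (ι K 0) = ι K 0 + (-(φ.symm f)) := by
      have h1 := congrArg φ.symm hfx
      rw [AlgEquiv.symm_apply_apply, map_add] at h1
      rw [eq_sub_of_add_eq h1.symm, sub_eq_add_neg]
    exact ⟨-(φ.symm f), neg_mem (adjoin_stable φ.symm (-b) hsy f hf), -b, hsx, hsy⟩


/-!
The translation part `(x + f(y), y + b) ↦ b` is a homomorphism from `U₂` onto the abelian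
group `(K, +)`, so commutators fix `y`. Conversely, conjugating `(x + q(y), y)` by `(x, y + 1)`
gives `(x + q(y + 1), y)`, hence `⁅(x, y + 1), (x + q(y), y)⁆ = (x + q(y + 1) - q(y), y)`;
and in characteristic zero every polynomial is a forward difference `q(X + 1) - q(X)`, by
induction on the degree, because `(X + 1)^(n + 1) - X^(n + 1) = (n + 1) X^n + (lower terms)`.
-/

open Polynomial
open scoped commutatorElement

theorem Polynomial.taylor_one_X_pow_succ_sub {R : Type*} [CommRing R] (n : ℕ) :
    taylor 1 (X ^ (n + 1)) - X ^ (n + 1) =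
      ∑ m ∈ Finset.range n, ((n + 1).choose m : R) • (X : R[X]) ^ m +
        ((n : R) + 1) • X ^ n := by
  rw [taylor_X_pow, C_1, add_pow, Finset.sum_range_succ, Finset.sum_range_succ]
  simp only [one_pow, mul_one, Nat.choose_self, Nat.choose_succ_self_right, Nat.cast_succ,
    Algebra.smul_def, algebraMap_eq, map_natCast, map_add, map_one]
  simp only [mul_comm (X ^ _ : R[X])]
  ring

theorem Polynomial.exists_taylor_one_sub_eq {K : Type*} [Field K] [CharZero K] (p : K[X]) :
    ∃ q, taylor 1 q - q = p := by
  let Δ : K[X] →ₗ[K] K[X] := taylor 1 - LinearMap.id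
  have hpow (n : ℕ) : (X : K[X]) ^ n ∈ LinearMap.range Δ := by
    induction n using Nat.strong_induction_on with
    | _ n ih =>
      have hn : ((n : K) + 1) • (X : K[X]) ^ n ∈ LinearMap.range Δ := by
        have := sub_mem (LinearMap.mem_range_self Δ (X ^ (n + 1)))
          (sum_mem fun m hm => Submodule.smul_mem _ ((n + 1).choose m : K)
            (ih m (Finset.mem_range.1 hm)))
        rwa [LinearMap.sub_apply, LinearMap.id_apply, taylor_one_X_pow_succ_sub,
          add_sub_cancel_left] at this
      have hn0 : (n : K) + 1 ≠ 0 := by exact_mod_cast n.succ_ne_zero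
      simpa [smul_smul, inv_mul_cancel₀ hn0] using Submodule.smul_mem _ ((n : K) + 1)⁻¹ hn
  suffices p ∈ LinearMap.range Δ from this
  induction p using Polynomial.induction_on' with
  | add p q hp hq => exact add_mem hp hq
  | monomial n a =>
    rw [← C_mul_X_pow_eq_monomial, ← smul_eq_C_mul]
    exact Submodule.smul_mem _ a (hpow n)

namespace A2

variable {K : Type} [Field K]

theorem algHom_ext {B : Type*} [Semiring B] [Algebra K B] {φ ψ : A2 K →ₐ[K] B}
    (hx : φ (ι K 0) = ψ (ι K 0)) (hy : φ (ι K 1) = ψ (ι K 1)) : φ = ψ := by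
  refine FreeAlgebra.hom_ext (funext fun i => ?_)
  fin_cases i
  exacts [hx, hy]

theorem algEquiv_ext {B : Type*} [Semiring B] [Algebra K B] {φ ψ : A2 K ≃ₐ[K] B}
    (hx : φ (ι K 0) = ψ (ι K 0)) (hy : φ (ι K 1) = ψ (ι K 1)) : φ = ψ :=
  AlgEquiv.coe_toAlgHom_injective (algHom_ext hx hy)

theorem mem_adjoin_y_iff {u : A2 K} :
    u ∈ Algebra.adjoin K ({ι K 1} : Set (A2 K)) ↔ ∃ p : K[X], aeval (ι K 1) p = u := by
  rw [Algebra.adjoin_singleton_eq_range_aeval, AlgHom.mem_range]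

def triangular (g : A2 K) (b : K) : A2 K →ₐ[K] A2 K :=
  lift K ![ι K 0 + g, ι K 1 + algebraMap K (A2 K) b]

@[simp]
theorem triangular_apply_x (g : A2 K) (b : K) : triangular g b (ι K 0) = ι K 0 + g := by
  simp [triangular]

@[simp]
theorem triangular_apply_y (g : A2 K) (b : K) :
    triangular g b (ι K 1) = ι K 1 + algebraMap K (A2 K) b := by
  simp [triangular]

theorem triangular_aeval_y (g : A2 K) (b : K) (p : K[X]) :
    triangular g b (aeval (ι K 1) p) = aeval (ι K 1) (taylor b p) := by
  rw [← aeval_algHom_apply, triangular_apply_y, taylor_apply, aeval_comp]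
  simp [Algebra.algebraMap_eq_smul_one]

theorem triangular_comp_triangular (g h : A2 K) (b c : K) :
    (triangular g b).comp (triangular h c) = triangular (g + triangular g b h) (b + c) :=
  algHom_ext (by simp [add_assoc]) (by simp [add_assoc])

theorem triangular_zero_zero : triangular (0 : A2 K) 0 = AlgHom.id K (A2 K) :=
  algHom_ext (by simp) (by simp)

def xShear (p : K[X]) : A2 K ≃ₐ[K] A2 K :=
  AlgEquiv.ofAlgHom (triangular (aeval (ι K 1) p) 0) (triangular (-aeval (ι K 1) p) 0)
    (by rw [triangular_comp_triangular, map_neg, triangular_aeval_y, taylor_zero, add_neg_cancel,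
      add_zero, triangular_zero_zero])
    (by rw [triangular_comp_triangular, triangular_aeval_y, taylor_zero, neg_add_cancel,
      add_zero, triangular_zero_zero])

def yTranslation (b : K) : A2 K ≃ₐ[K] A2 K :=
  AlgEquiv.ofAlgHom (triangular 0 b) (triangular 0 (-b))
    (by rw [triangular_comp_triangular, map_zero, add_zero, add_neg_cancel, triangular_zero_zero])
    (by rw [triangular_comp_triangular, map_zero, add_zero, neg_add_cancel, triangular_zero_zero])

@[simp]
theorem xShear_apply (p : K[X]) (u : A2 K) : xShear p u = triangular (aeval (ι K 1) p) 0 u := rfl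

@[simp]
theorem yTranslation_apply (b : K) (u : A2 K) : yTranslation b u = triangular 0 b u := rfl

theorem xShear_mem_U2 (p : K[X]) : xShear p ∈ U2 K :=
  ⟨aeval (ι K 1) p, mem_adjoin_y_iff.2 ⟨p, rfl⟩, 0, by simp, by simp⟩

theorem yTranslation_mem_U2 (b : K) : yTranslation b ∈ U2 K :=
  ⟨0, zero_mem _, b, by simp, by simp⟩

theorem apply_y_of_mem_U2 {φ : A2 K ≃ₐ[K] A2 K} (hφ : φ ∈ U2 K) :
    φ (ι K 1) = ι K 1 + algebraMap K (A2 K) (algebraMapInv (φ (ι K 1))) := by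
  obtain ⟨-, -, b, -, hy⟩ := hφ
  simp [hy, algebraMapInv]

theorem commutatorElement_yTranslation_xShear (b : K) (p : K[X]) :
    ⁅yTranslation b, xShear p⁆ = xShear (taylor b p - p) := by
  rw [commutatorElement_def, mul_inv_eq_iff_eq_mul, mul_inv_eq_iff_eq_mul]
  refine algEquiv_ext ?_ ?_
  · simp [triangular_aeval_y, add_assoc]
  · simp

-- `algebraMapInv` is the counit: it kills `x` and `y`, so it reads `b` off `y + b`.
def translationHom : U2 K →* Multiplicative K where
  toFun φ := .ofAdd (algebraMapInv ((φ : A2 K ≃ₐ[K] A2 K) (ι K 1)))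
  map_one' := by simp [algebraMapInv]
  map_mul' φ ψ := by
    rw [← ofAdd_add]
    congr 1
    show algebraMapInv (φ.1 (ψ.1 (ι K 1))) = _
    rw [apply_y_of_mem_U2 ψ.2]
    simp [algebraMapInv]

theorem apply_y_of_mem_commutator {φ : U2 K} (hφ : φ ∈ commutator (U2 K)) :
    (φ : A2 K ≃ₐ[K] A2 K) (ι K 1) = ι K 1 := by
  have hb : translationHom φ = 1 :=
    MonoidHom.mem_ker.1 (Abelianization.commutator_subset_ker translationHom hφ)
  rw [apply_y_of_mem_U2 φ.2, ofAdd_eq_one.1 hb, map_zero, add_zero]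

end A2

theorem commutator_subgroup_U2 (K : Type) [Field K] [CharZero K] (φ : U2 K) :
    φ ∈ commutator ↥(U2 K) ↔
      ∃ f ∈ Algebra.adjoin K ({ι K 1} : Set (A2 K)),
        (φ : A2 K ≃ₐ[K] A2 K) (ι K 0) = ι K 0 + f ∧
        (φ : A2 K ≃ₐ[K] A2 K) (ι K 1) = ι K 1 := by
  constructor
  · intro hφ
    obtain ⟨f, hf, -, hx, -⟩ := φ.2
    exact ⟨f, hf, hx, A2.apply_y_of_mem_commutator hφ⟩
  · rintro ⟨f, hf, hx, hy⟩
    obtain ⟨p, rfl⟩ := A2.mem_adjoin_y_iff.1 hf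
    obtain ⟨q, rfl⟩ := exists_taylor_one_sub_eq p
    let T : U2 K := ⟨A2.yTranslation 1, A2.yTranslation_mem_U2 1⟩
    let S : U2 K := ⟨A2.xShear q, A2.xShear_mem_U2 q⟩
    have hφ : (φ : A2 K ≃ₐ[K] A2 K) = A2.xShear (taylor 1 q - q) :=
      A2.algEquiv_ext (by simp [hx]) (by simp [hy])
    have hφ_eq : φ = ⁅T, S⁆ := Subtype.ext <| by
      rw [hφ, ← A2.commutatorElement_yTranslation_xShear]
      exact (map_commutatorElement (U2 K).subtype T S).symm
    rw [hφ_eq, commutator_def]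
    exact Subgroup.commutator_mem_commutator (Subgroup.mem_top T) (Subgroup.mem_top S)
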